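/- Let L > 0, let p_d ∈ ℝ³ with ‖p_d‖ = L, and let p : ℝ → ℝ³ be a curve with ‖p(t)‖ = L for all t, differentiable at t₀ with derivative v := p'(t₀), and such that p(t₀) × p_d ≠ 0. Define Δ := arccos(⟨p(t₀), p_d⟩ / L²), t̂ := (p_d − (⟨p(t₀), p_d⟩ / L²) p(t₀)) / (L sin Δ), and let w := −(⟨v, p_d⟩ / L²) · p(t₀) / (L sin Δ) − (cos Δ / (L sin Δ)) · (v − ⟨v, t̂⟩ t̂) be the derivative of t̂ at t₀. Then L Δ · ⟨v, w⟩ = −(Δ cos Δ / sin Δ) · (‖v‖² − ⟨v, t̂⟩²). -/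

import Mathlib

/-! Since `‖p(t)‖` is constant, the velocity `v` is orthogonal to `p(t₀)`, so the `p(t₀)`-component
of `w` does not contribute to `⟨v, w⟩`; what remains is algebra. -/

open Matrix

/-- Euclidean norm on `ℝ³` (as `Fin 3 → ℝ`). -/
noncomputable def norm3 (v : Fin 3 → ℝ) : ℝ := Real.sqrt (∑ i, v i ^ 2)

/-- Euclidean inner product on `ℝ³` (as `Fin 3 → ℝ`). -/
def inner3 (v w : Fin 3 → ℝ) : ℝ := ∑ i, v i * w i

/-- The angle `Δ = arccos(⟨p, p_d⟩/L²)` between `p` and `p_d`. -/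
noncomputable def angleTo (L : ℝ) (pd p : Fin 3 → ℝ) : ℝ :=
  Real.arccos (inner3 p pd / L ^ 2)

/-- The geodesic unit tangent vector `t̂ = (p_d - (⟨p,p_d⟩/L²) p)/(L sin Δ)`. -/
noncomputable def geoTangent (L : ℝ) (pd p : Fin 3 → ℝ) : Fin 3 → ℝ :=
  (L * Real.sin (angleTo L pd p))⁻¹ • (pd - (inner3 p pd / L ^ 2) • p)

/-- The derivative of `t̂` along the curve:
`w = -(⟨v, p_d⟩/L²) p/(L sin Δ) - (cos Δ/(L sin Δ))(v - ⟨v, t̂⟩ t̂)`. -/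
noncomputable def geoTangentDeriv (L : ℝ) (pd p v : Fin 3 → ℝ) : Fin 3 → ℝ :=
  -((inner3 v pd / L ^ 2) * (L * Real.sin (angleTo L pd p))⁻¹) • p -
    (Real.cos (angleTo L pd p) / (L * Real.sin (angleTo L pd p))) •
      (v - inner3 v (geoTangent L pd p) • geoTangent L pd p)

lemma inner3_eq_dotProduct (v w : Fin 3 → ℝ) : inner3 v w = v ⬝ᵥ w := rfl

lemma norm3_sq (v : Fin 3 → ℝ) : norm3 v ^ 2 = v ⬝ᵥ v := by
  rw [norm3, Real.sq_sqrt (Finset.sum_nonneg fun i _ => sq_nonneg (v i))]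
  simp only [dotProduct, sq]

theorem HasDerivAt.dotProduct {ι : Type*} [Fintype ι] {f g : ℝ → ι → ℝ} {f' g' : ι → ℝ}
    {x : ℝ} (hf : HasDerivAt f f' x) (hg : HasDerivAt g g' x) :
    HasDerivAt (fun t => f t ⬝ᵥ g t) (f' ⬝ᵥ g x + f x ⬝ᵥ g') x := by
  have h := HasDerivAt.fun_sum (u := Finset.univ) fun i _ =>
    (hasDerivAt_pi.1 hf i).fun_mul (hasDerivAt_pi.1 hg i)
  simpa only [_root_.dotProduct, Finset.sum_add_distrib] using h

theorem HasDerivAt.dotProduct_eq_zero_of_dotProduct_self_eq {ι : Type*} [Fintype ι]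
    {p : ℝ → ι → ℝ} {v : ι → ℝ} {t₀ c : ℝ} (hv : HasDerivAt p v t₀)
    (hp : ∀ t, p t ⬝ᵥ p t = c) : v ⬝ᵥ p t₀ = 0 := by
  have hconst : HasDerivAt (fun t => p t ⬝ᵥ p t) 0 t₀ := by
    simpa only [hp] using hasDerivAt_const t₀ c
  have h2 : v ⬝ᵥ p t₀ + p t₀ ⬝ᵥ v = 0 := (hv.dotProduct hv).unique hconst
  rw [dotProduct_comm (p t₀)] at h2
  linarith

lemma inner3_geoTangentDeriv_of_inner3_eq_zero {L : ℝ} {pd p v : Fin 3 → ℝ}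
    (hvp : inner3 v p = 0) :
    inner3 v (geoTangentDeriv L pd p v) =
      -(Real.cos (angleTo L pd p) / (L * Real.sin (angleTo L pd p))) *
        (norm3 v ^ 2 - inner3 v (geoTangent L pd p) ^ 2) := by
  simp only [geoTangentDeriv, inner3_eq_dotProduct, norm3_sq, dotProduct_sub,
    dotProduct_smul, smul_eq_mul] at hvp ⊢
  rw [hvp]
  ring

theorem stmt11_general (L : ℝ) (hL : 0 < L) (pd : Fin 3 → ℝ)
    (p : ℝ → Fin 3 → ℝ) (hp : ∀ t, norm3 (p t) = L) (t₀ : ℝ) (v : Fin 3 → ℝ)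
    (hv : HasDerivAt p v t₀) :
    L * angleTo L pd (p t₀) * inner3 v (geoTangentDeriv L pd (p t₀) v) =
      -(angleTo L pd (p t₀) * Real.cos (angleTo L pd (p t₀)) /
          Real.sin (angleTo L pd (p t₀))) *
        (norm3 v ^ 2 - inner3 v (geoTangent L pd (p t₀)) ^ 2) := by
  have hvp : inner3 v (p t₀) = 0 :=
    hv.dotProduct_eq_zero_of_dotProduct_self_eq fun t => by rw [← norm3_sq, hp t]
  rw [inner3_geoTangentDeriv_of_inner3_eq_zero hvp]
  rcases eq_or_ne (Real.sin (angleTo L pd (p t₀))) 0 with hs | hs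
  · -- both sides vanish, since division by zero gives `0`
    simp [hs]
  · field_simp [hL.ne']

/-- Closed form of the term `B₂ = dist(p, p_d) ⟨v, dt̂/dt⟩` in the proof of
Proposition 2: `L Δ ⟨v, w⟩ = -(Δ cos Δ / sin Δ)(‖v‖² - ⟨v, t̂⟩²)`. -/
theorem stmt11 (L : ℝ) (hL : 0 < L) (pd : Fin 3 → ℝ) (hpd : norm3 pd = L)
    (p : ℝ → Fin 3 → ℝ) (hp : ∀ t, norm3 (p t) = L) (t₀ : ℝ) (v : Fin 3 → ℝ)
    (hv : HasDerivAt p v t₀) (hc : crossProduct (p t₀) pd ≠ 0) :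
    L * angleTo L pd (p t₀) * inner3 v (geoTangentDeriv L pd (p t₀) v) =
      -(angleTo L pd (p t₀) * Real.cos (angleTo L pd (p t₀)) /
          Real.sin (angleTo L pd (p t₀))) *
        (norm3 v ^ 2 - inner3 v (geoTangent L pd (p t₀)) ^ 2) :=
  stmt11_general L hL pd p hp t₀ v hv
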